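/- For bounded operators A, B on a Hilbert space, the spectrum of the generalized derivation δ_{A,B} : B(H) → B(H), X ↦ AX - XB, is contained in σ(A) - σ(B) = {α - β : α ∈ σ(A), β ∈ σ(B)}. In particular if σ(A) ∩ σ(B) = ∅ then δ_{A,B} is invertible, so AX - XB = Y is uniquely solvable for every Y. -/

import Mathlib

variable {H : Type*} [NormedAddCommGroup H] [InnerProductSpace ℂ H] [CompleteSpace H]

/-- The generalized derivation `δ_{A,B} : B(H) → B(H)`, `X ↦ AX - XB`. -/
noncomputable def genDerivation (A B : H →L[ℂ] H) :
    (H →L[ℂ] H) →L[ℂ] (H →L[ℂ] H) :=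
  ContinuousLinearMap.mul ℂ (H →L[ℂ] H) A -
    (ContinuousLinearMap.mul ℂ (H →L[ℂ] H)).flip B

/-!
Left multiplication `L_A` and right multiplication `R_B` are commuting elements of the Banach
algebra `B(B(H))`, with `σ(L_A) ⊆ σ(A)` and `σ(R_B) ⊆ σ(B)` because `A ↦ L_A` and `B ↦ R_B` are
unital algebra homomorphisms (the latter from the opposite algebra). For commuting `a, b` in a
complex Banach algebra, the bicommutant of `{a, b}` is a closed commutative subalgebra that is
inverse-closed, so spectra may be computed there, and Gelfand theory gives
`σ(a - b) = {φ a - φ b | φ a character} ⊆ σ(a) - σ(b)`.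
-/

open scoped Pointwise
open MulOpposite

theorem spectrum_op {R A : Type*} [CommSemiring R] [Ring A] [Algebra R A] (a : A) :
    spectrum R (op a) = spectrum R a := by
  ext r
  rw [spectrum.mem_iff, spectrum.mem_iff, MulOpposite.algebraMap_apply, ← op_sub, isUnit_op]

namespace Subalgebra

variable {R A : Type*} [CommRing R] [Ring A] [Algebra R A]

theorem isUnit_centralizer_iff {s : Set A} {x : centralizer R s} :
    IsUnit x ↔ IsUnit (x : A) := by
  refine ⟨fun hx => hx.map (centralizer R s).val, fun ⟨u, hu⟩ => ?_⟩
  have hinv : (↑u⁻¹ : A) ∈ centralizer R s := fun g hg =>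
    (Commute.units_inv_left (hu ▸ x.2 g hg).symm).symm.eq
  exact ⟨⟨x, ⟨_, hinv⟩, Subtype.ext (by simp [← hu]), Subtype.ext (by simp [← hu])⟩, rfl⟩

theorem spectrum_centralizer_eq {s : Set A} (x : centralizer R s) :
    spectrum R x = spectrum R (x : A) := by
  ext r
  rw [spectrum.mem_iff, spectrum.mem_iff, isUnit_centralizer_iff, AddSubgroupClass.coe_sub,
    coe_algebraMap]

end Subalgebra

theorem Commute.spectrum_sub_subset {A : Type*} [NormedRing A] [NormedAlgebra ℂ A]
    [CompleteSpace A] {a b : A} (hab : Commute a b) :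
    spectrum ℂ (a - b) ⊆ spectrum ℂ a - spectrum ℂ b := by
  let M := Subalgebra.centralizer ℂ (Set.centralizer {a, b})
  have hcomm : ∀ x ∈ ({a, b} : Set A), ∀ y ∈ ({a, b} : Set A), x * y = y * x := by
    simp only [Set.mem_insert_iff, Set.mem_singleton_iff]
    rintro x (rfl | rfl) y (rfl | rfl) <;> first | rfl | exact hab.eq | exact hab.eq.symm
  let _ : NormedCommRing M :=
    { (inferInstance : NormedRing M) with
      mul_comm := fun x y =>
        Subtype.ext (Set.centralizer_centralizer_comm_of_comm hcomm _ x.2 _ y.2) }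
  have : CompleteSpace M := (Set.isClosed_centralizer _).completeSpace_coe
  let a' : M := ⟨a, Set.subset_centralizer_centralizer (by simp)⟩
  let b' : M := ⟨b, Set.subset_centralizer_centralizer (by simp)⟩
  intro z hz
  rw [show a - b = ((a' - b' : M) : A) from rfl, ← Subalgebra.spectrum_centralizer_eq] at hz
  obtain ⟨φ, rfl⟩ := WeakDual.CharacterSpace.mem_spectrum_iff_exists.mp hz
  rw [map_sub]
  exact Set.sub_mem_sub
    (Subalgebra.spectrum_centralizer_eq a' ▸ WeakDual.CharacterSpace.apply_mem_spectrum φ a')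
    (Subalgebra.spectrum_centralizer_eq b' ▸ WeakDual.CharacterSpace.apply_mem_spectrum φ b')

namespace ContinuousLinearMap

variable (𝕜 𝔸 : Type*) [NontriviallyNormedField 𝕜] [SeminormedRing 𝔸] [NormedAlgebra 𝕜 𝔸]

noncomputable def mulLeftAlgHom : 𝔸 →ₐ[𝕜] 𝔸 →L[𝕜] 𝔸 :=
  AlgHom.ofLinearMap (mul 𝕜 𝔸).toLinearMap (by ext; simp) fun a b => by ext; simp [mul_assoc]

noncomputable def mulRightAlgHom : 𝔸ᵐᵒᵖ →ₐ[𝕜] 𝔸 →L[𝕜] 𝔸 :=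
  AlgHom.ofLinearMap ((mul 𝕜 𝔸).flip.toLinearMap ∘ₗ (opLinearEquiv 𝕜).symm.toLinearMap)
    (by ext; simp) fun a b => by ext; simp [mul_assoc]

variable {𝕜 𝔸}

@[simp] theorem mulLeftAlgHom_apply (a : 𝔸) : mulLeftAlgHom 𝕜 𝔸 a = mul 𝕜 𝔸 a := rfl

@[simp] theorem mulRightAlgHom_apply (b : 𝔸ᵐᵒᵖ) :
    mulRightAlgHom 𝕜 𝔸 b = (mul 𝕜 𝔸).flip b.unop := rfl

theorem commute_mulLeftAlgHom_mulRightAlgHom (a : 𝔸) (b : 𝔸ᵐᵒᵖ) :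
    Commute (mulLeftAlgHom 𝕜 𝔸 a) (mulRightAlgHom 𝕜 𝔸 b) := by
  ext; simp [mul_assoc]

end ContinuousLinearMap

open ContinuousLinearMap

@[simp] theorem genDerivation_apply (A B X : H →L[ℂ] H) :
    genDerivation A B X = A * X - X * B := rfl

theorem spectrum_genDerivation_subset (A B : H →L[ℂ] H) :
    spectrum ℂ (genDerivation A B) ⊆ spectrum ℂ A - spectrum ℂ B := by
  have hδ : genDerivation A B = mulLeftAlgHom ℂ _ A - mulRightAlgHom ℂ _ (op B) := rfl
  rw [hδ]
  refine (commute_mulLeftAlgHom_mulRightAlgHom A (op B)).spectrum_sub_subset.trans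
    (Set.sub_subset_sub (AlgHom.spectrum_apply_subset _ A) ?_)
  exact (AlgHom.spectrum_apply_subset _ (op B)).trans (spectrum_op B).subset

theorem stmt16 (A B : H →L[ℂ] H) :
    spectrum ℂ (genDerivation A B) ⊆
      {z : ℂ | ∃ a ∈ spectrum ℂ A, ∃ b ∈ spectrum ℂ B, z = a - b} ∧
    (spectrum ℂ A ∩ spectrum ℂ B = ∅ →
      ∀ Y : H →L[ℂ] H, ∃! X : H →L[ℂ] H, A * X - X * B = Y) := by
  refine ⟨fun z hz => ?_, fun hdisj Y => ?_⟩
  · obtain ⟨a, ha, b, hb, rfl⟩ := spectrum_genDerivation_subset A B hz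
    exact ⟨a, ha, b, hb, rfl⟩
  · have hunit : IsUnit (genDerivation A B) := by
      refine (spectrum.zero_notMem_iff ℂ).mp fun h0 => ?_
      exact Set.zero_mem_sub_iff.mp (spectrum_genDerivation_subset A B h0)
        (Set.disjoint_iff_inter_eq_empty.mpr hdisj)
    simpa using (isUnit_iff_bijective.mp hunit).existsUnique Y
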